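/- arXiv:1405.2690 — 2 statements merged into one kernel-verified Lean document; each statement's English description precedes it below -/
import Mathlib

section
/- (Rockafellar–Uryasev representation, minimizer part) If X is an integrable real-valued random variable with continuous CDF F, then for α ∈ (0,1) the point ξ* = VaR_α(X) is a global minimizer of V(ξ) = ξ + (1/(1−α)) E[(X − ξ)₊]; moreover, ξ minimizes V if and only if P(X ≤ ξ) ≥ α and P(X < ξ) ≤ α (i.e., F(ξ) = α). -/
open MeasureTheory

open Set Filter Topology in
private lemma ru_ptwise (a b x : ℝ) (hab : a ≤ b) :
    max (x - a) 0 - max (x - b) 0 = (volume (Set.Ioc a b ∩ Set.Iio x)).toReal := by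
  rcases le_or_gt x a with h | h
  · have : Set.Ioc a b ∩ Set.Iio x = ∅ := by
      ext t; simp only [mem_inter_iff, mem_Ioc, mem_Iio, mem_empty_iff_false, iff_false]
      rintro ⟨⟨h1, _⟩, h2⟩; linarith
    rw [this]
    rw [max_eq_right (by linarith), max_eq_right (by linarith)]
    simp
  · rcases le_or_gt x b with h2 | h2
    · have : Set.Ioc a b ∩ Set.Iio x = Set.Ioo a x := by
        ext t; simp only [mem_inter_iff, mem_Ioc, mem_Iio, mem_Ioo]
        constructor
        · rintro ⟨⟨h1, _⟩, h3⟩; exact ⟨h1, h3⟩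
        · rintro ⟨h1, h3⟩; exact ⟨⟨h1, by linarith⟩, h3⟩
      rw [this, Real.volume_Ioo, ENNReal.toReal_ofReal (by linarith)]
      rw [max_eq_left (by linarith), max_eq_right (by linarith)]
      ring
    · have : Set.Ioc a b ∩ Set.Iio x = Set.Ioc a b := by
        rw [inter_eq_left]; intro t ht; exact lt_of_le_of_lt ht.2 h2
      rw [this, Real.volume_Ioc, ENNReal.toReal_ofReal (by linarith)]
      rw [max_eq_left (by linarith), max_eq_left (by linarith)]
      ring

open Set Filter Topology in
private lemma ru_fubini {Ω : Type*} [MeasurableSpace Ω] (μ : Measure Ω)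
    [IsProbabilityMeasure μ] (X : Ω → ℝ) (hXm : Measurable X) (a b : ℝ) :
    ∫ ω, (volume (Set.Ioc a b ∩ Set.Iio (X ω))).toReal ∂μ
      = ∫ t in Set.Ioc a b, (μ {ω | t < X ω}).toReal := by
  set s : Set (Ω × ℝ) := {p | p.2 ∈ Set.Ioc a b ∧ p.2 < X p.1} with hs
  have hsm : MeasurableSet s := by
    apply MeasurableSet.inter
    · exact measurable_snd measurableSet_Ioc
    · exact measurableSet_lt measurable_snd (hXm.comp measurable_fst)
  have h1 : ∀ ω, Prod.mk ω ⁻¹' s = Set.Ioc a b ∩ Set.Iio (X ω) := by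
    intro ω; ext t; simp [hs, Set.mem_Iio, and_comm]
  have h2 : ∀ t, {ω | (ω, t) ∈ s} = if t ∈ Set.Ioc a b then {ω | t < X ω} else ∅ := by
    intro t; split_ifs with h
    · obtain ⟨ha, hb⟩ := h
      ext ω; simp only [hs, Set.mem_setOf_eq, Set.mem_Ioc]; tauto
    · rw [Set.mem_Ioc] at h
      ext ω
      simp only [hs, Set.mem_setOf_eq, Set.mem_Ioc, Set.mem_empty_iff_false, iff_false]
      tauto
  have key : ∫⁻ ω, volume (Set.Ioc a b ∩ Set.Iio (X ω)) ∂μ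
      = ∫⁻ t in Set.Ioc a b, μ {ω | t < X ω} := by
    have e1 := Measure.prod_apply (μ := μ) (ν := volume) hsm
    have e2 := Measure.prod_apply_symm (μ := μ) (ν := volume) hsm
    rw [e1] at e2
    simp only [h1] at e2
    rw [e2, ← lintegral_indicator measurableSet_Ioc]
    congr 1; funext t
    have : (fun x => (x, t)) ⁻¹' s = {ω | (ω, t) ∈ s} := rfl
    rw [this, h2]
    split_ifs with h <;> simp [Set.indicator, h]
  have hmono : Monotone (fun x => volume (Set.Ioc a b ∩ Set.Iio x)) := by
    intro x y hxy
    exact measure_mono (inter_subset_inter_right _ (Iio_subset_Iio hxy))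
  have hmeas1 : Measurable fun ω => volume (Set.Ioc a b ∩ Set.Iio (X ω)) :=
    (hmono.measurable).comp hXm
  have hfin1 : ∀ ω, volume (Set.Ioc a b ∩ Set.Iio (X ω)) < ⊤ := by
    intro ω
    exact lt_of_le_of_lt (measure_mono inter_subset_left) (by simp [Real.volume_Ioc])
  have hanti : Antitone (fun t => μ {ω | t < X ω}) := by
    intro t u htu
    exact measure_mono (fun ω h => lt_of_le_of_lt htu h)
  have hmeas2 : Measurable fun t => μ {ω | t < X ω} := hanti.measurable
  rw [integral_toReal hmeas1.aemeasurable (ae_of_all _ hfin1), key,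
    integral_toReal (hmeas2.aemeasurable.restrict)
      (ae_of_all _ fun t => lt_of_le_of_lt prob_le_one (by norm_num))]

open Set Filter Topology in
private lemma ru_diffF {Ω : Type*} [MeasurableSpace Ω] (μ : Measure Ω)
    [IsProbabilityMeasure μ] (X : Ω → ℝ) (hXm : Measurable X)
    (hX : Integrable X μ) (a b : ℝ) (hab : a ≤ b) :
    (∫ ω, max (X ω - a) 0 ∂μ) - (∫ ω, max (X ω - b) 0 ∂μ)
      = ∫ t in Set.Ioc a b, (μ {ω | t < X ω}).toReal := by
  have ha : Integrable (fun ω => max (X ω - a) 0) μ := (hX.sub (integrable_const a)).pos_part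
  have hb : Integrable (fun ω => max (X ω - b) 0) μ := (hX.sub (integrable_const b)).pos_part
  rw [← integral_sub ha hb]
  rw [← ru_fubini μ X hXm a b]
  congr 1; funext ω; exact ru_ptwise a b (X ω) hab

open Set Filter Topology in
private lemma ru_Vdiff {Ω : Type*} [MeasurableSpace Ω] (μ : Measure Ω)
    [IsProbabilityMeasure μ] (X : Ω → ℝ) (hXm : Measurable X)
    (hX : Integrable X μ) (α : ℝ) (hα : α ∈ Set.Ioo (0 : ℝ) 1)
    (F : ℝ → ℝ) (hF : F = fun ξ => (μ {ω | X ω ≤ ξ}).toReal) (hFcont : Continuous F)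
    (V : ℝ → ℝ) (hV : V = fun ξ : ℝ => ξ + (1 - α)⁻¹ * ∫ ω, max (X ω - ξ) 0 ∂μ)
    (a b : ℝ) (hab : a ≤ b) :
    V b - V a = ∫ t in Set.Ioc a b, (1 - α)⁻¹ * (F t - α) := by
  have hα1 : (1 : ℝ) - α > 0 := by linarith [hα.2]
  set c : ℝ := (1 - α)⁻¹ with hc
  have hcompl : ∀ t : ℝ, (μ {ω | t < X ω}).toReal = 1 - F t := by
    intro t
    have hms : MeasurableSet {ω | X ω ≤ t} := hXm measurableSet_Iic
    have : {ω | t < X ω} = {ω | X ω ≤ t}ᶜ := by ext ω; simp [not_le]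
    rw [this, measure_compl hms (measure_ne_top μ _), measure_univ,
      ENNReal.toReal_sub_of_le prob_le_one (by norm_num), hF]
    simp
  have hFi : IntegrableOn F (Set.Ioc a b) volume :=
    hFcont.integrableOn_Ioc
  have hJ : ∫ t in Set.Ioc a b, (μ {ω | t < X ω}).toReal
      = (b - a) - ∫ t in Set.Ioc a b, F t := by
    simp only [hcompl]
    rw [integral_sub (integrableOn_const (C := (1:ℝ)) (s := Set.Ioc a b) (μ := volume)
      (by simp [Real.volume_Ioc])) hFi]
    rw [setIntegral_const]
    simp [Real.volume_Ioc, ENNReal.toReal_ofReal (by linarith : (0:ℝ) ≤ b - a)]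
    exact hab
  have hR : ∫ t in Set.Ioc a b, c * (F t - α)
      = c * ((∫ t in Set.Ioc a b, F t) - α * (b - a)) := by
    rw [integral_const_mul]
    congr 1
    rw [integral_sub hFi (integrableOn_const (by simp [Real.volume_Ioc]))]
    rw [setIntegral_const]
    simp [Real.volume_Ioc, ENNReal.toReal_ofReal (by linarith : (0:ℝ) ≤ b - a)]
    rw [max_eq_left (by linarith : (0:ℝ) ≤ b - a)]
    ring
  have hD := ru_diffF μ X hXm hX a b hab
  rw [hJ] at hD
  have hc1 : c * (1 - α) = 1 := inv_mul_cancel₀ (by linarith)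
  rw [hV, hR]
  simp only
  linear_combination (-c) * hD + (a - b) * hc1

open Set Filter Topology in
private lemma ru_char {Ω : Type*} [MeasurableSpace Ω] (μ : Measure Ω)
    [IsProbabilityMeasure μ] (X : Ω → ℝ) (hXm : Measurable X)
    (hX : Integrable X μ) (α : ℝ) (hα : α ∈ Set.Ioo (0 : ℝ) 1)
    (F : ℝ → ℝ) (hF : F = fun ξ => (μ {ω | X ω ≤ ξ}).toReal) (hFcont : Continuous F)
    (V : ℝ → ℝ) (hV : V = fun ξ : ℝ => ξ + (1 - α)⁻¹ * ∫ ω, max (X ω - ξ) 0 ∂μ)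
    (ξ : ℝ) : (∀ x : ℝ, V ξ ≤ V x) ↔ F ξ = α := by
  have hα1 : (0:ℝ) < 1 - α := by linarith [hα.2]
  have hc : (0:ℝ) < (1 - α)⁻¹ := inv_pos.2 hα1
  set g : ℝ → ℝ := fun t => (1 - α)⁻¹ * (F t - α) with hg
  have hgmono : Monotone g := by
    intro s t hst
    have : F s ≤ F t := by
      rw [hF]
      exact ENNReal.toReal_mono (measure_ne_top μ _)
        (measure_mono fun ω h => le_trans h hst)
    simp only [hg]
    nlinarith
  have hgcont : Continuous g := by continuity
  have hgi : ∀ a b : ℝ, IntegrableOn g (Set.Ioc a b) volume := fun a b =>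
    hgcont.integrableOn_Ioc
  have hVd : ∀ a b : ℝ, a ≤ b → V b - V a = ∫ t in Set.Ioc a b, g t :=
    fun a b hab => ru_Vdiff μ X hXm hX α hα F hF hFcont V hV a b hab
  constructor
  · intro hmin
    by_contra hne
    rcases lt_or_gt_of_ne hne with hlt | hgt
    · have hgξ : g ξ < 0 := by simp only [hg]; nlinarith
      have hev : ∀ᶠ t in 𝓝[>] ξ, g t < 0 := by
        have := hgcont.continuousAt (x := ξ)
        exact (this.eventually_lt_const hgξ).filter_mono nhdsWithin_le_nhds
      obtain ⟨t1, hgt1, ht1⟩ := (hev.and eventually_mem_nhdsWithin).exists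
      rw [Set.mem_Ioi] at ht1
      have hd := hVd ξ t1 ht1.le
      have hub : (∫ t in Set.Ioc ξ t1, g t) ≤ ∫ t in Set.Ioc ξ t1, g t1 := by
        apply setIntegral_mono_on (hgi ξ t1)
          (integrableOn_const (by simp [Real.volume_Ioc])) measurableSet_Ioc
        intro t ht; exact hgmono ht.2
      rw [setIntegral_const] at hub
      have hvol : (volume (Set.Ioc ξ t1)).toReal = t1 - ξ := by
        simp [Real.volume_Ioc, ENNReal.toReal_ofReal (by linarith : (0:ℝ) ≤ t1 - ξ)]
      rw [measureReal_def, hvol, smul_eq_mul] at hub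
      have : V t1 - V ξ < 0 := by
        rw [hd]; nlinarith
      linarith [hmin t1]
    · have hgξ : 0 < g ξ := by simp only [hg]; nlinarith
      have hev : ∀ᶠ t in 𝓝[<] ξ, 0 < g t :=
        (hgcont.continuousAt.eventually_const_lt hgξ).filter_mono nhdsWithin_le_nhds
      obtain ⟨t0, hgt0, ht0⟩ := (hev.and eventually_mem_nhdsWithin).exists
      rw [Set.mem_Iio] at ht0
      have hd := hVd t0 ξ ht0.le
      have hlb : (∫ t in Set.Ioc t0 ξ, g t0) ≤ ∫ t in Set.Ioc t0 ξ, g t := by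
        apply setIntegral_mono_on
          (integrableOn_const (by simp [Real.volume_Ioc])) (hgi t0 ξ) measurableSet_Ioc
        intro t ht; exact hgmono ht.1.le
      rw [setIntegral_const] at hlb
      have hvol : (volume (Set.Ioc t0 ξ)).toReal = ξ - t0 := by
        simp [Real.volume_Ioc, ENNReal.toReal_ofReal (by linarith : (0:ℝ) ≤ ξ - t0)]
      rw [measureReal_def, hvol, smul_eq_mul] at hlb
      have : 0 < V ξ - V t0 := by
        rw [hd]; nlinarith
      linarith [hmin t0]
  · intro heq x
    rcases le_total ξ x with h | h
    · have := hVd ξ x h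
      have hnn : 0 ≤ ∫ t in Set.Ioc ξ x, g t := by
        apply setIntegral_nonneg measurableSet_Ioc
        intro t ht
        have : g ξ ≤ g t := hgmono (le_of_lt ht.1)
        have hz : g ξ = 0 := by simp [hg, heq]
        linarith
      linarith
    · have := hVd x ξ h
      have hnp : (∫ t in Set.Ioc x ξ, g t) ≤ 0 := by
        apply setIntegral_nonpos measurableSet_Ioc
        intro t ht
        have : g t ≤ g ξ := hgmono ht.2
        have hz : g ξ = 0 := by simp [hg, heq]
        linarith
      linarith

/-- Rockafellar–Uryasev representation, minimizer part: for integrable `X` with continuous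
CDF `F` and `α ∈ (0,1)`, `ξ* = VaR_α(X)` is a global minimizer of
`V(ξ) = ξ + (1/(1−α)) E[(X − ξ)₊]`; more precisely, `ξ` minimizes `V` iff
`P(X ≤ ξ) ≥ α` and `P(X < ξ) ≤ α`. -/
theorem ru_minimizer {Ω : Type*} [MeasurableSpace Ω] (μ : Measure Ω)
    [IsProbabilityMeasure μ] (X : Ω → ℝ) (hXm : Measurable X) (hX : Integrable X μ)
    (α : ℝ) (hα : α ∈ Set.Ioo (0 : ℝ) 1)
    (F : ℝ → ℝ) (hF : F = fun ξ => (μ {ω | X ω ≤ ξ}).toReal) (hFcont : Continuous F)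
    (V : ℝ → ℝ) (hV : V = fun ξ : ℝ => ξ + (1 - α)⁻¹ * ∫ ω, max (X ω - ξ) 0 ∂μ) :
    (∀ ξ : ℝ, V (sInf {ξ : ℝ | α ≤ F ξ}) ≤ V ξ) ∧
      (∀ ξ : ℝ, (∀ x : ℝ, V ξ ≤ V x) ↔
        (α ≤ (μ {ω | X ω ≤ ξ}).toReal ∧ (μ {ω | X ω < ξ}).toReal ≤ α)) := by
  open Set Filter Topology in
  have hFmono : Monotone F := by
    intro s t hst
    rw [hF]
    exact ENNReal.toReal_mono (measure_ne_top μ _)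
      (measure_mono fun ω h => le_trans h hst)
  have hltF : ∀ ξ : ℝ, (μ {ω | X ω < ξ}).toReal = F ξ := by
    intro ξ
    have hub : (μ {ω | X ω < ξ}).toReal ≤ F ξ := by
      rw [hF]
      exact ENNReal.toReal_mono (measure_ne_top μ _)
        (measure_mono (fun ω (h : X ω < ξ) => h.le))
    have hlb : ∀ t, t < ξ → F t ≤ (μ {ω | X ω < ξ}).toReal := by
      intro t ht
      rw [hF]
      exact ENNReal.toReal_mono (measure_ne_top μ _)
        (measure_mono fun ω h => lt_of_le_of_lt h ht)
    have htend : Filter.Tendsto F (nhdsWithin ξ (Set.Iio ξ)) (nhds (F ξ)) :=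
      (hFcont.tendsto ξ).mono_left nhdsWithin_le_nhds
    have h2 : F ξ ≤ (μ {ω | X ω < ξ}).toReal :=
      le_of_tendsto htend (eventually_mem_nhdsWithin.mono fun t ht => hlb t ht)
    linarith
  have hiff : ∀ ξ : ℝ, (∀ x : ℝ, V ξ ≤ V x) ↔
      (α ≤ (μ {ω | X ω ≤ ξ}).toReal ∧ (μ {ω | X ω < ξ}).toReal ≤ α) := by
    intro ξ
    rw [ru_char μ X hXm hX α hα F hF hFcont V hV ξ, hltF ξ]
    have : (μ {ω | X ω ≤ ξ}).toReal = F ξ := by rw [hF]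
    rw [this]
    constructor
    · intro h; exact ⟨h.ge, h.le⟩
    · intro h; exact le_antisymm h.2 h.1
  refine ⟨?_, hiff⟩
  have hcdf : F = ProbabilityTheory.cdf (μ.map X) := by
    have : IsProbabilityMeasure (μ.map X) := Measure.isProbabilityMeasure_map hXm.aemeasurable
    funext ξ
    rw [ProbabilityTheory.cdf_eq_real, measureReal_def, Measure.map_apply hXm measurableSet_Iic, hF]
    rfl
  have hFtop : Filter.Tendsto F Filter.atTop (nhds 1) := by
    rw [hcdf]; exact ProbabilityTheory.tendsto_cdf_atTop _
  have hFbot : Filter.Tendsto F Filter.atBot (nhds 0) := by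
    rw [hcdf]; exact ProbabilityTheory.tendsto_cdf_atBot _
  set S := {ξ : ℝ | α ≤ F ξ} with hS
  have hSne : S.Nonempty := by
    obtain ⟨x, hx⟩ := (hFtop.eventually (eventually_ge_nhds hα.2)).exists
    exact ⟨x, hx⟩
  have hSbdd : BddBelow S := by
    obtain ⟨t, ht⟩ := (hFbot.eventually (eventually_lt_nhds hα.1)).exists
    refine ⟨t, fun s hs => ?_⟩
    by_contra hc
    push_neg at hc
    exact absurd (le_trans hs (hFmono hc.le)) (not_le.2 ht)
  have hSclosed : IsClosed S := isClosed_le continuous_const hFcont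
  set ξ₀ := sInf S with hξ₀
  have hmem : ξ₀ ∈ S := hSclosed.csInf_mem hSne hSbdd
  have h1 : α ≤ F ξ₀ := hmem
  have h2 : F ξ₀ ≤ α := by
    have hlt : ∀ t, t < ξ₀ → F t < α := by
      intro t ht
      by_contra hc
      push_neg at hc
      exact absurd (csInf_le hSbdd (hc : t ∈ S)) (not_le.2 ht)
    have htend : Filter.Tendsto F (nhdsWithin ξ₀ (Set.Iio ξ₀)) (nhds (F ξ₀)) :=
      (hFcont.tendsto ξ₀).mono_left nhdsWithin_le_nhds
    exact le_of_tendsto htend (eventually_mem_nhdsWithin.mono fun t ht => (hlt t ht).le)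
  intro ξ
  exact (ru_char μ X hXm hX α hα F hF hFcont V hV ξ₀).2 (le_antisymm h2 h1) ξ
end

section
/- (Rockafellar–Uryasev representation, value part) If X is integrable with continuous CDF and P(X ≥ VaR_α(X)) = 1 − α > 0, then V(VaR_α(X)) = E[X | X ≥ VaR_α(X)], i.e., the minimum value of V equals CVaR_α(X). -/
open MeasureTheory

/-! The excess `max (X - ξ) 0` lives on the tail `{ξ ≤ X}`, so its mean is the tail integral of
`X` minus `ξ` times the tail mass. When that mass is `1 - α`, the term `ξ` in `V(ξ)` cancels and
what is left is the tail average of `X`. -/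

lemma max_sub_zero_eq_indicator {Ω : Type*} (X : Ω → ℝ) (c : ℝ) :
    (fun ω => max (X ω - c) 0) = {ω | c ≤ X ω}.indicator (fun ω => X ω - c) := by
  funext ω
  by_cases h : c ≤ X ω
  · simp [h]
  · simp [h, (not_le.mp h).le]

lemma integral_max_sub_zero_eq {Ω : Type*} [MeasurableSpace Ω] {μ : Measure Ω}
    [IsFiniteMeasure μ] {X : Ω → ℝ} (hX : Integrable X μ) (c : ℝ) :
    ∫ ω, max (X ω - c) 0 ∂μ = ∫ ω in {ω | c ≤ X ω}, X ω ∂μ - c * μ.real {ω | c ≤ X ω} := by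
  have htail : NullMeasurableSet {ω | c ≤ X ω} μ :=
    nullMeasurableSet_le aemeasurable_const hX.aemeasurable
  rw [max_sub_zero_eq_indicator, integral_indicator₀ htail,
    integral_sub hX.integrableOn (integrableOn_const (measure_ne_top μ _)),
    setIntegral_const, smul_eq_mul, mul_comm]

theorem ru_value_eq_cvar_general {Ω : Type*} [MeasurableSpace Ω] (μ : Measure Ω)
    [IsProbabilityMeasure μ] (X : Ω → ℝ) (hX : Integrable X μ)
    (α : ℝ) (hα : α ∈ Set.Ioo (0 : ℝ) 1)
    (ξstar : ℝ) (hmass : (μ {ω | ξstar ≤ X ω}).toReal = 1 - α) :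
    ξstar + (1 - α)⁻¹ * ∫ ω, max (X ω - ξstar) 0 ∂μ =
      (∫ ω in {ω | ξstar ≤ X ω}, X ω ∂μ) / (μ {ω | ξstar ≤ X ω}).toReal := by
  have hα1 : 1 - α ≠ 0 := by linarith [hα.2]
  rw [integral_max_sub_zero_eq hX, measureReal_def, hmass]
  field_simp
  ring

/-- Rockafellar–Uryasev representation, value part: if `X` is integrable with
`P(X ≥ ξ*) = 1 − α > 0` where `ξ* = VaR_α(X)`, then
`V(ξ*) = E[X | X ≥ ξ*] = E[X·1{X ≥ ξ*}] / P(X ≥ ξ*)`, i.e. `min V = CVaR_α(X)`. -/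
theorem ru_value_eq_cvar {Ω : Type*} [MeasurableSpace Ω] (μ : Measure Ω)
    [IsProbabilityMeasure μ] (X : Ω → ℝ) (hXm : Measurable X) (hX : Integrable X μ)
    (α : ℝ) (hα : α ∈ Set.Ioo (0 : ℝ) 1)
    (ξstar : ℝ) (hξ : ξstar = sInf {ξ : ℝ | α ≤ (μ {ω | X ω ≤ ξ}).toReal})
    (hmass : (μ {ω | ξstar ≤ X ω}).toReal = 1 - α) :
    ξstar + (1 - α)⁻¹ * ∫ ω, max (X ω - ξstar) 0 ∂μ =
      (∫ ω in {ω | ξstar ≤ X ω}, X ω ∂μ) / (μ {ω | ξstar ≤ X ω}).toReal :=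
  ru_value_eq_cvar_general μ X hX α hα ξstar hmass
end
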